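/- (DMD eigenpair lifting.) Let S, Ṡ ∈ ℂ^{n×k}, and let S = U Σ V* with U ∈ ℂ^{n×r}, U*U = I_r, V ∈ ℂ^{k×r}, V*V = I_r, and Σ ∈ ℂ^{r×r} invertible diagonal. Define A := Ṡ V Σ⁻¹ U* and the reduced operator Ã := U* A U = U* Ṡ V Σ⁻¹ ∈ ℂ^{r×r}. If w ∈ ℂ^r is an eigenvector of à with eigenvalue λ ≠ 0, i.e. à w = λ w and w ≠ 0, then the DMD mode θ := Ṡ V Σ⁻¹ w is an eigenvector of A with the same eigenvalue: A θ = λ θ and θ ≠ 0. Hence every nonzero eigenvalue of à is an eigenvalue of A. -/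
import Mathlib


open Matrix

/-- DMD eigenpair lifting: for `A := Ṡ V Σ⁻¹ U*` and the reduced operator
`Ã := U* A U` (with `U*U = I`, `S = U Σ V*`, `V*V = I`, `Σ` invertible diagonal),
if `Ã w = λ w` with `w ≠ 0` and `λ ≠ 0`, then the DMD mode `θ := Ṡ V Σ⁻¹ w`
satisfies `A θ = λ θ` and `θ ≠ 0`; hence every nonzero eigenvalue of `Ã` is an
eigenvalue of `A`. Here `S'` plays the role of `Ṡ`, `Sg` of `Σ`, `At` of `Ã`. -/
theorem dmd_eigenpair_lifting
    (n k r : ℕ) (S S' : Matrix (Fin n) (Fin k) ℂ)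
    (U : Matrix (Fin n) (Fin r) ℂ) (V : Matrix (Fin k) (Fin r) ℂ)
    (Sg : Matrix (Fin r) (Fin r) ℂ)
    (hU : Uᴴ * U = 1) (hV : Vᴴ * V = 1)
    (hSgDiag : Sg.IsDiag) (hSg : IsUnit Sg.det)
    (hSVD : S = U * Sg * Vᴴ)
    (A : Matrix (Fin n) (Fin n) ℂ) (hA : A = S' * V * Sg⁻¹ * Uᴴ)
    (At : Matrix (Fin r) (Fin r) ℂ) (hAt : At = Uᴴ * A * U)
    (w : Fin r → ℂ) (lam : ℂ) (hw : w ≠ 0) (hlam : lam ≠ 0)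
    (heig : At.mulVec w = lam • w)
    (θ : Fin n → ℂ) (hθ : θ = (S' * V * Sg⁻¹).mulVec w) :
    A.mulVec θ = lam • θ ∧ θ ≠ 0 := by
  set B := S' * V * Sg⁻¹ with hB
  have hAtB : At = Uᴴ * B := by
    rw [hAt, hA, ← Matrix.mul_assoc Uᴴ B Uᴴ, Matrix.mul_assoc (Uᴴ * B) Uᴴ U, hU,
      Matrix.mul_one]
  have hAB : A = B * Uᴴ := by rw [hA, hB]
  have hAθ : A.mulVec θ = lam • θ := by
    have h1 : Uᴴ *ᵥ (B *ᵥ w) = lam • w := by rw [mulVec_mulVec, ← hAtB, heig]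
    rw [hθ, hAB, ← mulVec_mulVec, h1, mulVec_smul]
  refine ⟨hAθ, fun h0 => ?_⟩
  have : At.mulVec w = Uᴴ.mulVec θ := by
    rw [hAtB, hθ, ← mulVec_mulVec]
  rw [h0, mulVec_zero, heig] at this
  exact hw (by simpa [hlam] using smul_eq_zero.mp this)
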